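/- arXiv:1908.09293 — 3 statements merged into one kernel-verified Lean document; each statement's English description precedes it below -/
import Mathlib

section
/- Let L be a complete lattice with least element 0, ω₁ a **-closed down-set (ω₁** = ω₁) and ω₂ an arbitrary down-set in L. Then ω₁ ∩ ω₂** = (ω₁ ∩ ω₂)**. -/
variable {L : Type*} [CompleteLattice L]

/-- A down-set containing the least element. -/
def IsDownSet (ω : Set L) : Prop :=
  ⊥ ∈ ω ∧ ∀ ⦃x y : L⦄, x ∈ ω → y ≤ x → y ∈ ω

/-- The pseudo-complement: the largest down-set whose intersection with ω is {⊥}. -/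
def pcomp (ω : Set L) : Set L :=
  ⋃₀ {ω1 : Set L | IsDownSet ω1 ∧ ω ∩ ω1 = {⊥}}

/-! For `⊆`: if `y ≤ x` lies in `(ω₁ ∩ ω₂)*` and `x ∈ ω₁`, then `y ∈ ω₁`, and every `z ≤ y` in `ω₂`
lies in `ω₁ ∩ ω₂`, so `y ∈ ω₂*`; as `x ∈ ω₂**`, `y = ⊥`. For `⊇`, `**` is monotone and `ω₁** = ω₁`. -/

-- `pcomp ω = ∅` when `⊥ ∉ ω`, since the family in its definition is then empty.
theorem mem_pcomp {ω : Set L} {x : L} :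
    x ∈ pcomp ω ↔ ⊥ ∈ ω ∧ ∀ y ∈ ω, y ≤ x → y = ⊥ := by
  constructor
  · rintro ⟨ω', ⟨hω', hinter⟩, hx⟩
    refine ⟨(hinter ▸ Set.mem_singleton ⊥ : ⊥ ∈ ω ∩ ω').1, fun y hy hyx => ?_⟩
    have : y ∈ ω ∩ ω' := ⟨hy, hω'.2 hx hyx⟩
    rwa [hinter, Set.mem_singleton_iff] at this
  · rintro ⟨hbot, hx⟩
    refine ⟨Set.Iic x, ⟨⟨bot_le, fun _ _ ha hba => hba.trans ha⟩, ?_⟩, le_rfl⟩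
    ext z
    constructor
    · rintro ⟨hz, hzx⟩
      exact hx z hz hzx
    · rintro rfl
      exact ⟨hbot, bot_le⟩

theorem bot_mem_pcomp_iff {ω : Set L} : ⊥ ∈ pcomp ω ↔ ⊥ ∈ ω :=
  mem_pcomp.trans ⟨And.left, fun h => ⟨h, fun _ _ => le_bot_iff.1⟩⟩

theorem pcomp_anti {ω ω' : Set L} (hbot : ⊥ ∈ ω) (h : ω ⊆ ω') : pcomp ω' ⊆ pcomp ω :=
  fun _ hx => mem_pcomp.2 ⟨hbot, fun y hy => (mem_pcomp.1 hx).2 y (h hy)⟩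

theorem pcomp_pcomp_mono {ω ω' : Set L} (h : ω ⊆ ω') :
    pcomp (pcomp ω) ⊆ pcomp (pcomp ω') := by
  intro x hx
  have hbot : ⊥ ∈ ω := bot_mem_pcomp_iff.1 (mem_pcomp.1 hx).1
  exact pcomp_anti (bot_mem_pcomp_iff.2 (h hbot)) (pcomp_anti hbot h) hx

theorem inter_pcomp_inter_subset_pcomp {ω₁ ω₂ : Set L} (h₁ : IsLowerSet ω₁) :
    ω₁ ∩ pcomp (ω₁ ∩ ω₂) ⊆ pcomp ω₂ := by
  rintro y ⟨hy₁, hy⟩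
  obtain ⟨⟨-, hbot⟩, hy⟩ := mem_pcomp.1 hy
  exact mem_pcomp.2 ⟨hbot, fun z hz hzy => hy z ⟨h₁ hzy hy₁, hz⟩ hzy⟩

theorem inter_pcomp_pcomp_subset {ω₁ ω₂ : Set L} (h₁ : IsDownSet ω₁) :
    ω₁ ∩ pcomp (pcomp ω₂) ⊆ pcomp (pcomp (ω₁ ∩ ω₂)) := by
  have h₁' : IsLowerSet ω₁ := fun _ _ hba ha => h₁.2 ha hba
  rintro x ⟨hx₁, hx₂⟩
  obtain ⟨hbot₂, hx₂⟩ := mem_pcomp.1 hx₂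
  refine mem_pcomp.2 ⟨bot_mem_pcomp_iff.2 ⟨h₁.1, bot_mem_pcomp_iff.1 hbot₂⟩, fun y hy hyx => ?_⟩
  exact hx₂ y (inter_pcomp_inter_subset_pcomp h₁' ⟨h₁' hyx hx₁, hy⟩) hyx

theorem closed_inter_double_pcomp_general (ω₁ ω₂ : Set L)
    (h₁ : IsDownSet ω₁) (h₁c : pcomp (pcomp ω₁) = ω₁) :
    ω₁ ∩ pcomp (pcomp ω₂) = pcomp (pcomp (ω₁ ∩ ω₂)) := by
  refine (inter_pcomp_pcomp_subset h₁).antisymm (Set.subset_inter ?_ ?_)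
  · exact (pcomp_pcomp_mono Set.inter_subset_left).trans h₁c.subset
  · exact pcomp_pcomp_mono Set.inter_subset_right

theorem closed_inter_double_pcomp (ω₁ ω₂ : Set L)
    (h₁ : IsDownSet ω₁) (h₁c : pcomp (pcomp ω₁) = ω₁) (h₂ : IsDownSet ω₂) :
    ω₁ ∩ pcomp (pcomp ω₂) = pcomp (pcomp (ω₁ ∩ ω₂)) :=
  closed_inter_double_pcomp_general ω₁ ω₂ h₁ h₁c
end

section
/- Let L be a complete lattice of subfactors of M_n (a ⋂-structure closed under arbitrary meets and containing M_n) such that L is closed under taking commutants in M_n. Then L, ordered by inclusion, is a complete complemented lattice of finite length. -/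
open Matrix
abbrev Mat (n : ℕ) := Matrix (Fin n) (Fin n) ℂ

/-- The trivial subfactor ℂ·1, as a set. -/
def scalarSet (n : ℕ) : Set (Mat n) := Set.range (fun z : ℂ => z • (1 : Mat n))

/-- A (sub)factor: a unital star-subalgebra with trivial center. -/
def IsFactor {n : ℕ} (A : StarSubalgebra ℂ (Mat n)) : Prop :=
  ∀ x ∈ A, (∀ y ∈ A, x * y = y * x) → ∃ c : ℂ, x = c • (1 : Mat n)

abbrev Vn (n : ℕ) := EuclideanSpace ℂ (Fin n)

section Proj
variable {E : Type*} [NormedAddCommGroup E] [InnerProductSpace ℂ E] [FiniteDimensional ℂ E]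

noncomputable def projL (W : Submodule ℂ E) : E →ₗ[ℂ] E :=
  W.subtype ∘ₗ W.projectionOnto Wᗮ (Submodule.isCompl_orthogonal_of_hasOrthogonalProjection (K := W))

lemma projL_mem (W : Submodule ℂ E) (v : E) : projL W v ∈ W := by
  simp [projL]

lemma projL_of_mem {W : Submodule ℂ E} {v : E} (h : v ∈ W) : projL W v = v := by
  simpa [projL] using congrArg (Submodule.subtype W)
    (Submodule.projectionOnto_apply_left (Submodule.isCompl_orthogonal_of_hasOrthogonalProjection (K := W)) ⟨v, h⟩)

lemma projL_of_mem_orth {W : Submodule ℂ E} {v : E} (h : v ∈ Wᗮ) : projL W v = 0 := by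
  simp [projL, Submodule.projectionOnto_apply_of_mem_right _ h]

lemma sub_projL_mem_orth (W : Submodule ℂ E) (v : E) : v - projL W v ∈ Wᗮ := by
  have := Submodule.projection_add_projection_eq_self
    (Submodule.isCompl_orthogonal_of_hasOrthogonalProjection (K := W)) v
  have h2 : v - projL W v =
      (Wᗮ.projectionOnto W (Submodule.isCompl_orthogonal_of_hasOrthogonalProjection (K := W)).symm v : E) := by
    nth_rewrite 1 [← this]; simp [projL]
  rw [h2]; exact Submodule.coe_mem _

lemma projL_comm {W : Submodule ℂ E} (g : E →ₗ[ℂ] E) (hW : ∀ v ∈ W, g v ∈ W)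
    (hW' : ∀ v ∈ Wᗮ, g v ∈ Wᗮ) (v : E) : projL W (g v) = g (projL W v) := by
  conv_lhs => rw [show v = projL W v + (v - projL W v) by abel]
  rw [map_add, map_add, projL_of_mem (hW _ (projL_mem W v)),
    projL_of_mem_orth (hW' _ (sub_projL_mem_orth W v)), add_zero]

lemma projL_eq_top_of_id {W : Submodule ℂ E} (h : ∀ v, projL W v = v) : W = ⊤ := by
  rw [← Submodule.orthogonal_eq_bot_iff (K := W)]
  ext v
  simp only [Submodule.mem_bot]
  constructor
  · intro hv; rw [← h v, projL_of_mem_orth hv]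
  · rintro rfl; exact zero_mem _

end Proj

section MatrixOf
variable {n : ℕ}

noncomputable def mvl {n : ℕ} (m : Mat n) : Vn n →ₗ[ℂ] Vn n :=
  (WithLp.linearEquiv 2 ℂ (Fin n → ℂ)).symm.toLinearMap ∘ₗ m.mulVecLin ∘ₗ
    (WithLp.linearEquiv 2 ℂ (Fin n → ℂ)).toLinearMap

@[simp] lemma mvl_apply {n : ℕ} (m : Mat n) (v : Vn n) : mvl m v = m.mulVec v := rfl

lemma mvl_mul {n : ℕ} (a b : Mat n) : mvl (a * b) = mvl a ∘ₗ mvl b := by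
  ext v
  simp [mulVec_mulVec]

lemma mvl_one {n : ℕ} : mvl (1 : Mat n) = LinearMap.id := by
  ext v; simp

lemma mvl_inj {n : ℕ} : Function.Injective (mvl (n := n)) := by
  intro a b h
  ext i j
  have := congrArg (fun f => (f : Vn n →ₗ[ℂ] Vn n) ((WithLp.equiv 2 _).symm (Pi.single j 1)) i) h
  simpa [mulVec, dotProduct, EuclideanSpace.single_apply, mul_ite, Finset.sum_ite_eq] using this

lemma inner_mvl {n : ℕ} (m : Mat n) (x y : Vn n) :
    (inner ℂ (mvl mᴴ x) y : ℂ) = inner ℂ x (mvl m y) := by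
  simp only [mvl_apply, PiLp.inner_apply, RCLike.inner_apply, mulVec, dotProduct,
    conjTranspose_apply, star_sum, star_mul', star_star, Finset.mul_sum, Finset.sum_mul,
    starRingEnd_apply]
  rw [Finset.sum_comm]
  exact Finset.sum_congr rfl fun j _ => Finset.sum_congr rfl fun i _ => by ring

noncomputable def matrixOf (f : Vn n →ₗ[ℂ] Vn n) : Mat n :=
  LinearMap.toMatrix' ((WithLp.linearEquiv 2 ℂ (Fin n → ℂ)).toLinearMap ∘ₗ f ∘ₗ
    (WithLp.linearEquiv 2 ℂ (Fin n → ℂ)).symm.toLinearMap)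

lemma mvl_matrixOf (f : Vn n →ₗ[ℂ] Vn n) : mvl (matrixOf f) = f := by
  apply LinearMap.ext
  intro v
  show WithLp.toLp 2 ((matrixOf f).mulVec v) = f v
  rw [← Matrix.toLin'_apply, matrixOf, Matrix.toLin'_toMatrix']
  rfl

end MatrixOf

section Invariance
variable {n : ℕ}

def InvA (A : StarSubalgebra ℂ (Mat n)) (W : Submodule ℂ (Vn n)) : Prop :=
  ∀ a ∈ A, ∀ v ∈ W, mvl a v ∈ W

lemma mem_centA {A : StarSubalgebra ℂ (Mat n)} {z : Mat n} :
    z ∈ StarSubalgebra.centralizer ℂ (A : Set (Mat n)) ↔ ∀ g ∈ A, g * z = z * g := by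
  constructor
  · exact fun h g hg => ((StarSubalgebra.mem_centralizer_iff ℂ).1 h g hg).1
  · intro h
    exact (StarSubalgebra.mem_centralizer_iff ℂ).2 fun g hg => ⟨h g hg, h (star g) (star_mem hg)⟩

lemma InvA.orth {A : StarSubalgebra ℂ (Mat n)} {W : Submodule ℂ (Vn n)} (h : InvA A W) :
    InvA A Wᗮ := by
  intro a ha v hv
  rw [Submodule.mem_orthogonal _ _]
  intro u hu
  rw [← inner_mvl a u v]
  have haH : aᴴ ∈ A := by
    rw [← Matrix.star_eq_conjTranspose]; exact star_mem ha
  exact (Submodule.mem_orthogonal _ _).1 hv _ (h aᴴ haH u hu)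

end Invariance

section Core
variable {n : ℕ}

def commA (A : StarSubalgebra ℂ (Mat n)) (f : Vn n →ₗ[ℂ] Vn n) : Prop :=
  ∀ a ∈ A, ∀ v, f (mvl a v) = mvl a (f v)

lemma matrixOf_mem_centralizer {A : StarSubalgebra ℂ (Mat n)} {f : Vn n →ₗ[ℂ] Vn n}
    (h : commA A f) : matrixOf f ∈ StarSubalgebra.centralizer ℂ (A : Set (Mat n)) := by
  rw [mem_centA]
  intro g hg
  apply mvl_inj
  rw [mvl_mul, mvl_mul, mvl_matrixOf]
  exact LinearMap.ext fun v => (h g hg v).symm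

lemma commA_projL {A : StarSubalgebra ℂ (Mat n)} {W : Submodule ℂ (Vn n)} (hW : InvA A W) :
    commA A (projL W) := fun a ha v => projL_comm (mvl a) (hW a ha) (hW.orth a ha) v

lemma smul_one_inj (hn : 0 < n) {c d : ℂ} (h : c • (1 : Mat n) = d • (1 : Mat n)) : c = d := by
  have := congrFun (congrFun h ⟨0, hn⟩) ⟨0, hn⟩
  simpa [Matrix.one_apply] using this

lemma mvl_zero : mvl (0 : Mat n) = 0 := by
  apply LinearMap.ext; intro v; ext i; simp

lemma invariant_eq_bot_or_top (hn : 0 < n) {A : StarSubalgebra ℂ (Mat n)}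
    (hA' : ∀ z ∈ StarSubalgebra.centralizer ℂ (A : Set (Mat n)),
      (∀ y ∈ StarSubalgebra.centralizer ℂ (A : Set (Mat n)), z * y = y * z) →
        ∃ c : ℂ, z = c • (1 : Mat n))
    {W : Submodule ℂ (Vn n)} (hW : InvA A W)
    (hW' : InvA (StarSubalgebra.centralizer ℂ (A : Set (Mat n))) W) :
    W = ⊥ ∨ W = ⊤ := by
  have hc : commA A (projL W) := commA_projL hW
  have hc' : commA (StarSubalgebra.centralizer ℂ (A : Set (Mat n))) (projL W) := commA_projL hW'
  have hzmem := matrixOf_mem_centralizer hc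
  have hzcomm : ∀ y ∈ StarSubalgebra.centralizer ℂ (A : Set (Mat n)),
      matrixOf (projL W) * y = y * matrixOf (projL W) := by
    intro y hy
    apply mvl_inj
    rw [mvl_mul, mvl_mul, mvl_matrixOf]
    exact LinearMap.ext fun v => hc' y hy v
  obtain ⟨c, hcz⟩ := hA' _ hzmem hzcomm
  have hidem : matrixOf (projL W) * matrixOf (projL W) = matrixOf (projL W) := by
    apply mvl_inj
    rw [mvl_mul, mvl_matrixOf]
    exact LinearMap.ext fun v => projL_of_mem (projL_mem W v)
  have hc2 : c * c = c := by
    apply smul_one_inj hn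
    have : (c • (1 : Mat n)) * (c • 1) = c • 1 := by rw [← hcz]; exact hidem
    simpa [smul_smul] using this
  have hc01 : c = 0 ∨ c = 1 := by
    have : c * (c - 1) = 0 := by ring_nf; linear_combination hc2
    rcases mul_eq_zero.1 this with h | h
    · exact Or.inl h
    · exact Or.inr (sub_eq_zero.1 h)
  rcases hc01 with rfl | rfl
  · left
    have hz0 : matrixOf (projL W) = 0 := by rw [hcz, zero_smul]
    have hp0 : projL W = 0 := by rw [← mvl_matrixOf (projL W), hz0, mvl_zero]
    ext v
    simp only [Submodule.mem_bot]
    constructor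
    · intro hv
      have := projL_of_mem hv
      rw [hp0] at this
      simpa using this.symm
    · rintro rfl; exact zero_mem _
  · right
    have hz1 : matrixOf (projL W) = 1 := by rw [hcz, one_smul]
    have hp1 : projL W = LinearMap.id := by rw [← mvl_matrixOf (projL W), hz1, mvl_one]
    exact projL_eq_top_of_id fun v => by rw [hp1]; rfl

end Core

section Simple
variable {n : ℕ}

def SimpleA (A : StarSubalgebra ℂ (Mat n)) (S : Submodule ℂ (Vn n)) : Prop :=
  InvA A S ∧ S ≠ ⊥ ∧ ∀ U ≤ S, InvA A U → U = ⊥ ∨ U = S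

lemma schur {A : StarSubalgebra ℂ (Mat n)} {S : Submodule ℂ (Vn n)} (hS : SimpleA A S)
    {f : Vn n →ₗ[ℂ] Vn n} (hcomm : commA A f) (hf : ∀ v ∈ S, f v ∈ S) :
    ∃ c : ℂ, ∀ v ∈ S, f v = c • v := by
  have : Nontrivial ↥S := Submodule.nontrivial_iff_ne_bot.2 hS.2.1
  obtain ⟨c, hc⟩ := Module.End.exists_eigenvalue (f.restrict hf)
  obtain ⟨⟨v₀, hv₀S⟩, hv₀eig, hv₀ne⟩ := hc.exists_hasEigenvector
  refine ⟨c, ?_⟩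
  set U : Submodule ℂ (Vn n) := LinearMap.ker (f - c • LinearMap.id) ⊓ S with hU
  have hUinv : InvA A U := by
    intro a ha v hv
    obtain ⟨hv1, hv2⟩ := hv
    refine ⟨?_, hS.1 a ha v hv2⟩
    simp only [SetLike.mem_coe, LinearMap.mem_ker, LinearMap.sub_apply, LinearMap.smul_apply,
      LinearMap.id_apply] at hv1 ⊢
    rw [hcomm a ha v, sub_eq_zero.1 hv1]
    simp [sub_eq_zero]
  have hUne : U ≠ ⊥ := by
    intro hbot
    apply hv₀ne
    have hm : v₀ ∈ U := by
      refine ⟨?_, hv₀S⟩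
      simp only [SetLike.mem_coe, LinearMap.mem_ker, LinearMap.sub_apply, LinearMap.smul_apply, LinearMap.id_apply]
      have heig : (f.restrict hf) ⟨v₀, hv₀S⟩ = c • ⟨v₀, hv₀S⟩ :=
        Module.End.mem_eigenspace_iff.1 hv₀eig
      have := congrArg (Submodule.subtype S) heig
      simpa [sub_eq_zero] using this
    rw [hbot] at hm
    exact Subtype.ext (by simpa using hm)
  have := (hS.2.2 U inf_le_right hUinv).resolve_left hUne
  intro v hv
  have hvU : v ∈ U := this ▸ hv
  obtain ⟨hv1, _⟩ := hvU
  simp only [SetLike.mem_coe, LinearMap.mem_ker, LinearMap.sub_apply, LinearMap.smul_apply,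
    LinearMap.id_apply] at hv1
  exact sub_eq_zero.1 hv1

lemma exists_simple_le {A : StarSubalgebra ℂ (Mat n)} :
    ∀ (k : ℕ) (W : Submodule ℂ (Vn n)), Module.finrank ℂ W = k → InvA A W → W ≠ ⊥ →
      ∃ S ≤ W, SimpleA A S := by
  intro k
  induction k using Nat.strong_induction_on with
  | _ k ih =>
    intro W hrk hW hW0
    by_cases hs : ∀ U ≤ W, InvA A U → U = ⊥ ∨ U = W
    · exact ⟨W, le_refl W, hW, hW0, hs⟩
    · push_neg at hs
      obtain ⟨U, hUW, hUinv, hUne1, hUne2⟩ := hs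
      have hlt : Module.finrank ℂ U < k := by
        rw [← hrk]
        exact Submodule.finrank_lt_finrank_of_lt (lt_of_le_of_ne hUW hUne2)
      obtain ⟨S, hSU, hS⟩ := ih _ hlt U rfl hUinv hUne1
      exact ⟨S, hSU.trans hUW, hS⟩

lemma invA_inf {A : StarSubalgebra ℂ (Mat n)} {W U : Submodule ℂ (Vn n)}
    (hW : InvA A W) (hU : InvA A U) : InvA A (W ⊓ U) :=
  fun a ha v hv => ⟨hW a ha v hv.1, hU a ha v hv.2⟩

lemma invA_map {A : StarSubalgebra ℂ (Mat n)} {W : Submodule ℂ (Vn n)} (hW : InvA A W)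
    {f : Vn n →ₗ[ℂ] Vn n} (hcomm : commA A f) : InvA A (Submodule.map f W) := by
  rintro a ha v ⟨w, hw, rfl⟩
  exact ⟨mvl a w, hW a ha w hw, hcomm a ha w⟩

lemma invA_sSup {A : StarSubalgebra ℂ (Mat n)} {𝒰 : Set (Submodule ℂ (Vn n))}
    (h : ∀ U ∈ 𝒰, InvA A U) : InvA A (sSup 𝒰) := by
  intro a ha v hv
  have hle : Submodule.map (mvl a) (sSup 𝒰) ≤ sSup 𝒰 := by
    conv_lhs => rw [sSup_eq_iSup' 𝒰, Submodule.map_iSup]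
    apply iSup_le
    rintro ⟨U, hU⟩
    refine le_trans ?_ (le_sSup hU)
    rintro x ⟨w, hw, rfl⟩
    exact h U hU a ha w hw
  exact hle ⟨v, hv, rfl⟩


end Simple

section Isotypic
variable {n : ℕ}

lemma invA_ker {A : StarSubalgebra ℂ (Mat n)} {f : Vn n →ₗ[ℂ] Vn n} (hcomm : commA A f) :
    InvA A (LinearMap.ker f) := by
  intro a ha v hv
  rw [LinearMap.mem_ker] at hv ⊢
  rw [hcomm a ha v, hv, map_zero]

lemma commA_comp {A : StarSubalgebra ℂ (Mat n)} {f g : Vn n →ₗ[ℂ] Vn n}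
    (hf : commA A f) (hg : commA A g) : commA A (f ∘ₗ g) := by
  intro a ha v
  simp only [LinearMap.comp_apply, hg a ha v, hf a ha (g v)]

lemma commA_mvl_central {A : StarSubalgebra ℂ (Mat n)} {m : Mat n}
    (hm : m ∈ StarSubalgebra.centralizer ℂ (A : Set (Mat n))) : commA A (mvl m) := by
  intro a ha v
  have : m * a = a * m := (mem_centA.1 hm a ha).symm
  calc mvl m (mvl a v) = mvl (m * a) v := by rw [mvl_mul]; rfl
  _ = mvl (a * m) v := by rw [this]
  _ = mvl a (mvl m v) := by rw [mvl_mul]; rfl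

lemma map_simple_or_bot {A : StarSubalgebra ℂ (Mat n)} {S : Submodule ℂ (Vn n)}
    (hS : SimpleA A S) {f : Vn n →ₗ[ℂ] Vn n} (hcomm : commA A f) :
    Submodule.map f S = ⊥ ∨ (SimpleA A (Submodule.map f S) ∧
      Module.finrank ℂ (Submodule.map f S) = Module.finrank ℂ S) := by
  by_cases hbot : Submodule.map f S = ⊥
  · exact Or.inl hbot
  right
  have hK : LinearMap.ker f ⊓ S = ⊥ := by
    rcases hS.2.2 (LinearMap.ker f ⊓ S) inf_le_right (invA_inf (invA_ker hcomm) hS.1) with h | h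
    · exact h
    · exfalso
      apply hbot
      rw [Submodule.eq_bot_iff]
      rintro x ⟨w, hw, rfl⟩
      have : w ∈ LinearMap.ker f ⊓ S := by rw [h]; exact hw
      exact LinearMap.mem_ker.1 this.1
  constructor
  · refine ⟨invA_map hS.1 hcomm, hbot, ?_⟩
    intro U hU hUinv
    rcases hS.2.2 (S ⊓ Submodule.comap f U) inf_le_left
        (invA_inf hS.1 (by
          intro a ha v hv
          rw [Submodule.mem_comap] at hv ⊢
          rw [hcomm a ha v]
          exact hUinv a ha _ hv)) with h | h
    · left
      rw [Submodule.eq_bot_iff]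
      intro u hu
      obtain ⟨w, hw, rfl⟩ := hU hu
      have : w ∈ S ⊓ Submodule.comap f U := ⟨hw, hu⟩
      rw [h] at this
      exact (by simpa using this : w = 0) ▸ map_zero f
    · right
      refine le_antisymm hU ?_
      rintro x ⟨w, hw, rfl⟩
      have : w ∈ S ⊓ Submodule.comap f U := by rw [h]; exact hw
      exact this.2
  · have h1 : Submodule.map f S = LinearMap.range (f ∘ₗ S.subtype) := by
      rw [LinearMap.range_comp, Submodule.range_subtype]
    have h2 : LinearMap.ker (f ∘ₗ S.subtype) = ⊥ := by
      rw [Submodule.eq_bot_iff]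
      intro x hx
      rw [LinearMap.mem_ker] at hx
      have : (x : Vn n) ∈ LinearMap.ker f ⊓ S := ⟨hx, x.2⟩
      rw [hK] at this
      exact Subtype.ext (by simpa using this)
    have := LinearMap.finrank_range_add_finrank_ker (f ∘ₗ S.subtype)
    rw [h2, finrank_bot, add_zero] at this
    rw [h1, this]

end Isotypic

section Structure
variable {n : ℕ}

def FacC (A : StarSubalgebra ℂ (Mat n)) : Prop :=
  ∀ z ∈ StarSubalgebra.centralizer ℂ (A : Set (Mat n)),
    (∀ y ∈ StarSubalgebra.centralizer ℂ (A : Set (Mat n)), z * y = y * z) →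
      ∃ c : ℂ, z = c • (1 : Mat n)

lemma isotypic_top (hn : 0 < n) {A : StarSubalgebra ℂ (Mat n)} (hA' : FacC A)
    {S : Submodule ℂ (Vn n)} (hS : SimpleA A S) :
    sSup {U | ∃ m ∈ StarSubalgebra.centralizer ℂ (A : Set (Mat n)),
      U = Submodule.map (mvl m) S} = ⊤ := by
  set 𝒰 : Set (Submodule ℂ (Vn n)) :=
    {U | ∃ m ∈ StarSubalgebra.centralizer ℂ (A : Set (Mat n)),
      U = Submodule.map (mvl m) S} with h𝒰
  have hSmem : S ∈ 𝒰 := ⟨1, one_mem _, by rw [mvl_one, Submodule.map_id]⟩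
  have hWinvA : InvA A (sSup 𝒰) := by
    apply invA_sSup
    rintro U ⟨m, hm, rfl⟩
    exact invA_map hS.1 (commA_mvl_central hm)
  have hWinvC : InvA (StarSubalgebra.centralizer ℂ (A : Set (Mat n))) (sSup 𝒰) := by
    intro m' hm' v hv
    have hle : Submodule.map (mvl m') (sSup 𝒰) ≤ sSup 𝒰 := by
      conv_lhs => rw [sSup_eq_iSup' 𝒰, Submodule.map_iSup]
      apply iSup_le
      rintro ⟨U, ⟨m, hm, rfl⟩⟩
      have : Submodule.map (mvl m') (Submodule.map (mvl m) S) =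
          Submodule.map (mvl (m' * m)) S := by
        rw [mvl_mul, ← Submodule.map_comp]
      rw [this]
      exact le_sSup ⟨m' * m, mul_mem hm' hm, rfl⟩
    exact hle ⟨v, hv, rfl⟩
  rcases invariant_eq_bot_or_top hn hA' hWinvA hWinvC with h | h
  · exact absurd (Submodule.eq_bot_iff _ |>.1 h) (by
      intro hall
      apply hS.2.1
      rw [Submodule.eq_bot_iff]
      intro v hv
      exact hall v (le_sSup hSmem hv))
  · exact h

lemma finrank_simple_eq (hn : 0 < n) {A : StarSubalgebra ℂ (Mat n)} (hA' : FacC A)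
    {S T : Submodule ℂ (Vn n)} (hS : SimpleA A S) (hT : SimpleA A T) :
    Module.finrank ℂ S = Module.finrank ℂ T := by
  have htop := isotypic_top hn hA' hS
  set 𝒰 : Set (Submodule ℂ (Vn n)) :=
    {U | ∃ m ∈ StarSubalgebra.centralizer ℂ (A : Set (Mat n)),
      U = Submodule.map (mvl m) S} with h𝒰
  have hp : commA A (projL T) := commA_projL hT.1
  have hex : ∃ U ∈ 𝒰, Submodule.map (projL T) U ≠ ⊥ := by
    by_contra hall
    push_neg at hall
    have : Submodule.map (projL T) (sSup 𝒰) = ⊥ := by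
      conv_lhs => rw [sSup_eq_iSup' 𝒰, Submodule.map_iSup]
      apply le_antisymm _ bot_le
      apply iSup_le
      rintro ⟨U, hU⟩
      rw [hall U hU]
    rw [htop] at this
    apply hT.2.1
    rw [Submodule.eq_bot_iff]
    intro t ht
    have : projL T t ∈ (⊥ : Submodule ℂ (Vn n)) := this ▸ ⟨t, trivial, rfl⟩
    rw [projL_of_mem ht] at this
    simpa using this
  obtain ⟨U, ⟨m, hm, rfl⟩, hne⟩ := hex
  have hcomp : Submodule.map (projL T) (Submodule.map (mvl m) S) =
      Submodule.map (projL T ∘ₗ mvl m) S := by rw [← Submodule.map_comp]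
  rw [hcomp] at hne
  have hg : commA A (projL T ∘ₗ mvl m) := commA_comp hp (commA_mvl_central hm)
  rcases map_simple_or_bot hS hg with h | ⟨hsimp, hrk⟩
  · exact absurd h hne
  have hle : Submodule.map (projL T ∘ₗ mvl m) S ≤ T := by
    rintro x ⟨w, hw, rfl⟩
    exact projL_mem T _
  rcases hT.2.2 _ hle hsimp.1 with h | h
  · exact absurd h hne
  · rw [← hrk, h]

lemma kill_zero (hn : 0 < n) {A : StarSubalgebra ℂ (Mat n)} (hA' : FacC A)
    {S : Submodule ℂ (Vn n)} (hS : SimpleA A S) {a : Mat n} (ha : a ∈ A)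
    (h0 : ∀ v ∈ S, mvl a v = 0) : a = 0 := by
  have htop := isotypic_top hn hA' hS
  have hker : (⊤ : Submodule ℂ (Vn n)) ≤ LinearMap.ker (mvl a) := by
    rw [← htop]
    apply sSup_le
    rintro U ⟨m, hm, rfl⟩
    rintro x ⟨w, hw, rfl⟩
    rw [LinearMap.mem_ker]
    have : mvl a (mvl m w) = mvl m (mvl a w) := (commA_mvl_central hm a ha w).symm
    rw [this, h0 w hw, map_zero]
  apply mvl_inj
  rw [mvl_zero]
  apply LinearMap.ext
  intro v
  simpa using LinearMap.mem_ker.1 (hker (Submodule.mem_top (x := v)))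

lemma simple_dvd_finrank (hn : 0 < n) {A : StarSubalgebra ℂ (Mat n)} (hA' : FacC A)
    {S : Submodule ℂ (Vn n)} (hS : SimpleA A S) :
    ∀ (k : ℕ) (W : Submodule ℂ (Vn n)), Module.finrank ℂ W = k → InvA A W →
      Module.finrank ℂ S ∣ Module.finrank ℂ W := by
  intro k
  induction k using Nat.strong_induction_on with
  | _ k ih =>
    intro W hrk hWinv
    by_cases hW0 : W = ⊥
    · rw [hW0, finrank_bot]
      exact dvd_zero _
    obtain ⟨S', hS'W, hS'⟩ := exists_simple_le (Module.finrank ℂ W) W rfl hWinv hW0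
    have hrkS' : Module.finrank ℂ S' = Module.finrank ℂ S :=
      (finrank_simple_eq hn hA' hS hS').symm
    set W' := W ⊓ S'ᗮ with hW'
    have hW'inv : InvA A W' := invA_inf hWinv hS'.1.orth
    have hsup : S' ⊔ W' = W := by
      apply le_antisymm (sup_le hS'W inf_le_left)
      intro w hw
      have h1 : projL S' w ∈ S' := projL_mem _ _
      have h2 : w - projL S' w ∈ W' :=
        ⟨Submodule.sub_mem W hw (hS'W h1), sub_projL_mem_orth S' w⟩
      have : w = projL S' w + (w - projL S' w) := by abel
      rw [this]
      exact Submodule.add_mem_sup h1 h2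
    have hinf : S' ⊓ W' = ⊥ := by
      apply le_antisymm _ bot_le
      intro x hx
      have : x ∈ S' ⊓ S'ᗮ := ⟨hx.1, hx.2.2⟩
      rw [Submodule.inf_orthogonal_eq_bot] at this
      exact this
    have hadd := Submodule.finrank_sup_add_finrank_inf_eq S' W'
    rw [hsup, hinf, finrank_bot, add_zero] at hadd
    have hS'pos : 0 < Module.finrank ℂ S' := by
      rcases Nat.eq_zero_or_pos (Module.finrank ℂ S') with h | h
      · exact absurd (Submodule.finrank_eq_zero.1 h) hS'.2.1
      · exact h
    have hlt : Module.finrank ℂ W' < k := by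
      omega
    have hdvd := ih _ hlt W' rfl hW'inv
    rw [← hrkS'] at hdvd ⊢
    rw [hadd]
    exact Nat.dvd_add (dvd_refl _) hdvd

end Structure

section Burn
variable {n d : ℕ}

abbrev En (n d : ℕ) := PiLp 2 (fun _ : Fin d => Vn n)

noncomputable def Dg (d : ℕ) (m : Mat n) : En n d →ₗ[ℂ] En n d where
  toFun v := WithLp.toLp 2 fun i => WithLp.toLp 2 (m.mulVec (v i))
  map_add' u v := by
    ext i j
    simp [Matrix.mulVec_add]
  map_smul' c v := by
    ext i j
    simp [Matrix.mulVec_smul]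

lemma Dg_apply (m : Mat n) (w : En n d) (k : Fin d) : Dg d m w k = mvl m (w k) := rfl

noncomputable def incE (d : ℕ) (j : Fin d) : Vn n →ₗ[ℂ] En n d where
  toFun v := WithLp.toLp 2 (Pi.single (M := fun _ : Fin d => Vn n) j v)
  map_add' u v := congrArg (WithLp.toLp 2) (Pi.single_add (f := fun _ : Fin d => Vn n) j u v)
  map_smul' c v := congrArg (WithLp.toLp 2) (Pi.single_smul (f := fun _ : Fin d => Vn n) j c v)

lemma incE_same (j : Fin d) (v : Vn n) : incE d j v j = v :=
  Pi.single_eq_same (M := fun _ : Fin d => Vn n) j v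

lemma incE_ne {j k : Fin d} (h : k ≠ j) (v : Vn n) : incE d j v k = 0 :=
  Pi.single_eq_of_ne (M := fun _ : Fin d => Vn n) h v

noncomputable def prjE (d : ℕ) (k : Fin d) : En n d →ₗ[ℂ] Vn n where
  toFun v := v k
  map_add' _ _ := rfl
  map_smul' _ _ := rfl

lemma sumE_apply (g : Fin d → En n d) (k : Fin d) : (∑ j, g j) k = ∑ j, g j k :=
  map_sum (prjE d k) g Finset.univ

lemma inner_Dg (m : Mat n) (x y : En n d) :
    (inner ℂ (Dg d mᴴ x) y : ℂ) = inner ℂ x (Dg d m y) := by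
  simp only [PiLp.inner_apply]
  exact Finset.sum_congr rfl fun i _ => inner_mvl m (x i) (y i)

lemma burn {A : StarSubalgebra ℂ (Mat n)} {S : Submodule ℂ (Vn n)} (hS : SimpleA A S)
    (x : Mat n) (hx : ∀ v ∈ S, WithLp.toLp 2 (x.mulVec v) ∈ S) :
    ∃ a ∈ A, ∀ v ∈ S, a.mulVec v = x.mulVec v := by
  classical
  set d := Module.finrank ℂ ↥S with hd
  let s : Module.Basis (Fin d) ℂ ↥S := Module.finBasis ℂ ↥S
  let ψ : Mat n →ₗ[ℂ] En n d :=
    { toFun := fun m => WithLp.toLp 2 fun i => WithLp.toLp 2 (m.mulVec (s i : Vn n))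
      map_add' := fun u v => by
        ext i j
        simp [Matrix.add_mulVec]
      map_smul' := fun c v => by
        ext i j
        simp [Matrix.smul_mulVec] }
  set N : Submodule ℂ (En n d) :=
    Submodule.map ψ (Subalgebra.toSubmodule A.toSubalgebra) with hN
  have hψ_mul : ∀ (m b : Mat n), Dg d m (ψ b) = ψ (m * b) := by
    intro m b
    ext i j
    simp [Dg, ψ, Matrix.mulVec_mulVec]
  have hNinv : ∀ a ∈ A, ∀ v ∈ N, Dg d a v ∈ N := by
    rintro a ha v ⟨b, hb, rfl⟩
    rw [hψ_mul]
    exact ⟨a * b, (Subalgebra.mem_toSubmodule _).2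
      (mul_mem ha ((Subalgebra.mem_toSubmodule _).1 hb)), rfl⟩
  have hNorth : ∀ a ∈ A, ∀ v ∈ Nᗮ, Dg d a v ∈ Nᗮ := by
    intro a ha v hv
    rw [Submodule.mem_orthogonal _ _]
    intro u hu
    rw [← inner_Dg a u v]
    have haH : aᴴ ∈ A := by rw [← Matrix.star_eq_conjTranspose]; exact star_mem ha
    exact (Submodule.mem_orthogonal _ _).1 hv _ (hNinv aᴴ haH u hu)
  have hπcomm : ∀ a ∈ A, ∀ v, projL N (Dg d a v) = Dg d a (projL N v) :=
    fun a ha v => projL_comm (Dg d a) (hNinv a ha) (hNorth a ha) v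
  have hNS : ∀ u ∈ N, ∀ i, u i ∈ S := by
    rintro u ⟨b, hb, rfl⟩ i
    have := hS.1 b ((Subalgebra.mem_toSubmodule _).1 hb) (s i : Vn n) (s i).2
    exact this
  let blk : Fin d → Fin d → (Vn n →ₗ[ℂ] Vn n) := fun i j =>
    { toFun := fun v => projL N (incE d j v) i
      map_add' := fun u v => by
        show projL N (incE d j (u + v)) i = projL N (incE d j u) i + projL N (incE d j v) i
        rw [map_add, map_add]
        rfl
      map_smul' := fun c v => by
        show projL N (incE d j (c • v)) i = c • projL N (incE d j v) i
        rw [_root_.map_smul, _root_.map_smul]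
        rfl }
  have hblk_comm : ∀ i j, commA A (blk i j) := by
    intro i j a ha v
    have h1 : incE d j (mvl a v) = Dg d a (incE d j v) := by
      ext k : 1
      rw [Dg_apply]
      by_cases hk : k = j
      · subst hk
        rw [incE_same, incE_same]
      · rw [incE_ne hk, incE_ne hk, map_zero]
    show projL N (incE d j (mvl a v)) i = mvl a (projL N (incE d j v) i)
    rw [h1, hπcomm a ha]
    rfl
  have hblk_S : ∀ i j, ∀ v : Vn n, blk i j v ∈ S := by
    intro i j v
    exact hNS _ (projL_mem N _) i
  have hc : ∀ i j, ∃ c : ℂ, ∀ v ∈ S, blk i j v = c • v :=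
    fun i j => schur hS (hblk_comm i j) (fun v _ => hblk_S i j v)
  choose c hcspec using hc
  have hdecomp : ∀ u : En n d, ∀ i, projL N u i = ∑ j, blk i j (u j) := by
    intro u i
    have hu : u = ∑ j, incE d j (u j) := by
      ext k : 1
      rw [sumE_apply, Finset.sum_eq_single k]
      · exact (incE_same k (u k)).symm
      · intro j _ hj
        exact incE_ne (Ne.symm hj) (u j)
      · intro h
        exact absurd (Finset.mem_univ k) h
    conv_lhs => rw [hu, map_sum]
    rw [sumE_apply]
    rfl
  have hkey : ∀ u : En n d, (∀ j, u j ∈ S) → projL N (Dg d x u) = Dg d x (projL N u) := by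
    intro u hu
    ext i : 1
    have hxu : ∀ j, (mvl x (u j)) ∈ S := fun j => hx _ (hu j)
    calc projL N (Dg d x u) i = ∑ j, blk i j (mvl x (u j)) := hdecomp _ i
    _ = ∑ j, mvl x (c i j • u j) := Finset.sum_congr rfl fun j _ => by
        rw [hcspec i j (mvl x (u j)) (hxu j), (mvl x).map_smul]
    _ = mvl x (∑ j, c i j • u j) := (map_sum (mvl x) _ _).symm
    _ = mvl x (∑ j, blk i j (u j)) :=
        congrArg (mvl x) (Finset.sum_congr rfl fun j _ => (hcspec i j _ (hu j)).symm)
    _ = mvl x (projL N u i) := congrArg (mvl x) (hdecomp u i).symm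
    _ = Dg d x (projL N u) i := rfl
  have hwmem : ψ 1 ∈ N := ⟨1, (Subalgebra.mem_toSubmodule _).2 (one_mem _), rfl⟩
  have hwS : ∀ j, (ψ 1 : En n d) j ∈ S := fun j => hNS _ hwmem j
  have hXw : Dg d x (ψ 1) ∈ N := by
    have h1 : projL N (ψ 1) = ψ 1 := projL_of_mem hwmem
    have h2 := hkey (ψ 1) hwS
    rw [h1] at h2
    rw [← h2]
    exact projL_mem N _
  obtain ⟨b, hb, hbeq⟩ := hXw
  refine ⟨b, (Subalgebra.mem_toSubmodule _).1 hb, ?_⟩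
  have hbs : ∀ i, b.mulVec (s i : Vn n) = x.mulVec (s i : Vn n) := by
    intro i
    calc b.mulVec (s i : Vn n) = (ψ b) i := rfl
    _ = (Dg d x (ψ 1)) i := by rw [hbeq]
    _ = x.mulVec ((1 : Mat n).mulVec (s i : Vn n)) := rfl
    _ = x.mulVec (s i : Vn n) := by rw [Matrix.one_mulVec]
  intro v hv
  have hrepr : v = ∑ i, (s.repr ⟨v, hv⟩ i) • (s i : Vn n) := by
    have h1 := s.sum_repr ⟨v, hv⟩
    have h2 := congrArg (Submodule.subtype S) h1
    rw [map_sum] at h2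
    simp only [_root_.map_smul, Submodule.coe_subtype] at h2
    exact h2.symm
  rw [show b.mulVec v = mvl b v from rfl, show x.mulVec v = mvl x v from rfl, hrepr,
    map_sum, map_sum]
  congr 1
  exact Finset.sum_congr rfl fun i _ => by
    rw [(mvl b).map_smul, (mvl x).map_smul]
    exact congrArg _ (WithLp.ofLp_injective 2 (hbs i))

end Burn

section Dim
variable {n : ℕ}

lemma mvl_add (a b : Mat n) : mvl (a + b) = mvl a + mvl b := by
  apply LinearMap.ext; intro v
  show WithLp.toLp 2 ((a + b).mulVec v) = WithLp.toLp 2 (a.mulVec v + b.mulVec v)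
  rw [Matrix.add_mulVec]

lemma mvl_smul (c : ℂ) (a : Mat n) : mvl (c • a) = c • mvl a := by
  apply LinearMap.ext; intro v
  show WithLp.toLp 2 ((c • a).mulVec v) = WithLp.toLp 2 (c • a.mulVec v)
  rw [Matrix.smul_mulVec]

lemma mvl_sub (a b : Mat n) : mvl (a - b) = mvl a - mvl b := by
  apply LinearMap.ext; intro v
  show WithLp.toLp 2 ((a - b).mulVec v) = WithLp.toLp 2 (a.mulVec v - b.mulVec v)
  rw [Matrix.sub_mulVec]

lemma finrank_algebra_eq_sq (hn : 0 < n) {A : StarSubalgebra ℂ (Mat n)} (hA' : FacC A)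
    {S : Submodule ℂ (Vn n)} (hS : SimpleA A S) :
    Module.finrank ℂ ↥A = Module.finrank ℂ S * Module.finrank ℂ S := by
  let ρ : ↥A →ₗ[ℂ] (↥S →ₗ[ℂ] ↥S) :=
    { toFun := fun a => (mvl a.1).restrict (fun x hx => hS.1 a.1 a.2 x hx)
      map_add' := fun a b => by
        apply LinearMap.ext; intro v
        apply Subtype.ext
        show mvl (a.1 + b.1) v = mvl a.1 v + mvl b.1 v
        rw [mvl_add]; rfl
      map_smul' := fun c a => by
        apply LinearMap.ext; intro v
        apply Subtype.ext
        show mvl (c • (a : Mat n)) v = c • mvl a.1 v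
        rw [mvl_smul]; rfl }
  have hinj : Function.Injective ρ := by
    intro a b hab
    apply Subtype.ext
    have hzero : ∀ v ∈ S, mvl (a.1 - b.1) v = 0 := by
      intro v hv
      have h1 := congrArg (fun g => (g ⟨v, hv⟩ : Vn n)) hab
      have h2 : mvl a.1 v = mvl b.1 v := h1
      rw [mvl_sub]
      simp only [LinearMap.sub_apply]
      rw [h2, sub_self]
    have := kill_zero hn hA' hS (sub_mem a.2 b.2) hzero
    exact sub_eq_zero.1 this
  have hsurj : Function.Surjective ρ := by
    intro g
    let f : Vn n →ₗ[ℂ] Vn n := S.subtype ∘ₗ g ∘ₗ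
      (S.linearProjOfIsCompl Sᗮ (Submodule.isCompl_orthogonal_of_hasOrthogonalProjection (K := S)))
    have hfS : ∀ v : Vn n, f v ∈ S := fun v => Submodule.coe_mem _
    have hfv : ∀ v (hv : v ∈ S), f v = (g ⟨v, hv⟩ : Vn n) := by
      intro v hv
      show (S.subtype (g (S.linearProjOfIsCompl Sᗮ _ v))) = _
      rw [show S.linearProjOfIsCompl Sᗮ (Submodule.isCompl_orthogonal_of_hasOrthogonalProjection (K := S))
          v = ⟨v, hv⟩ from S.linearProjOfIsCompl_apply_left _ ⟨v, hv⟩]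
      rfl
    obtain ⟨a, ha, haeq⟩ := burn hS (matrixOf f) (by
      intro v hv
      have : (matrixOf f).mulVec v = f v := by rw [← mvl_apply, mvl_matrixOf]
      rw [this]
      exact hfS v)
    refine ⟨⟨a, ha⟩, ?_⟩
    apply LinearMap.ext
    rintro ⟨v, hv⟩
    apply Subtype.ext
    show mvl a v = (g ⟨v, hv⟩ : Vn n)
    apply WithLp.ofLp_injective 2
    rw [mvl_apply, haeq v hv, ← mvl_apply, mvl_matrixOf, hfv v hv]
  have := LinearEquiv.finrank_eq (LinearEquiv.ofBijective ρ ⟨hinj, hsurj⟩)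
  rw [this, Module.finrank_linearMap]

end Dim

section NT
open ArithmeticFunction

lemma omega_pos_of_two_le {t : ℕ} (ht : t ≠ 0) (ht1 : t ≠ 1) :
    1 ≤ ArithmeticFunction.cardFactors t := by
  rw [ArithmeticFunction.cardFactors_apply]
  rcases Nat.eq_zero_or_pos t.primeFactorsList.length with h | h
  · exfalso
    rw [List.length_eq_zero_iff] at h
    rcases (Nat.primeFactorsList_eq_nil t).1 h with h' | h'
    · exact ht h'
    · exact ht1 h'
  · exact h

lemma omega_lt_of_dvd {a b : ℕ} (h : a ∣ b) (hne : a ≠ b) (hb : b ≠ 0) :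
    ArithmeticFunction.cardFactors a < ArithmeticFunction.cardFactors b := by
  obtain ⟨t, rfl⟩ := h
  have ha : a ≠ 0 := by rintro rfl; exact hb (zero_mul t)
  have ht : t ≠ 0 := by rintro rfl; exact hb (mul_zero a)
  have ht1 : t ≠ 1 := by rintro rfl; exact hne (mul_one a).symm
  rw [ArithmeticFunction.cardFactors_mul ha ht]
  have := omega_pos_of_two_le ht ht1
  omega

lemma omega_le_of_dvd {a b : ℕ} (h : a ∣ b) (hb : b ≠ 0) :
    ArithmeticFunction.cardFactors a ≤ ArithmeticFunction.cardFactors b := by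
  obtain ⟨t, rfl⟩ := h
  have ha : a ≠ 0 := by rintro rfl; exact hb (zero_mul t)
  have ht : t ≠ 0 := by rintro rfl; exact hb (mul_zero a)
  rw [ArithmeticFunction.cardFactors_mul ha ht]
  omega

end NT

section Bridge
variable {n : ℕ}

noncomputable def subalgEquiv (A : StarSubalgebra ℂ (Mat n)) :
    ↥(Subalgebra.toSubmodule A.toSubalgebra) ≃ₗ[ℂ] ↥A where
  toFun x := ⟨x.1, x.2⟩
  invFun x := ⟨x.1, x.2⟩
  map_add' _ _ := rfl
  map_smul' _ _ := rfl
  left_inv _ := rfl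
  right_inv _ := rfl

lemma finrank_toSubmodule (A : StarSubalgebra ℂ (Mat n)) :
    Module.finrank ℂ ↥(Subalgebra.toSubmodule A.toSubalgebra) = Module.finrank ℂ ↥A :=
  LinearEquiv.finrank_eq (subalgEquiv A)

lemma nontrivial_Vn (hn : 0 < n) : Nontrivial (Vn n) := by
  refine ⟨⟨0, (WithLp.equiv 2 _).symm (Pi.single ⟨0, hn⟩ 1), fun h => ?_⟩⟩
  have := congrArg (fun w : Vn n => w ⟨0, hn⟩) h
  simp [Pi.single_apply] at this

lemma top_ne_bot_Vn (hn : 0 < n) : (⊤ : Submodule ℂ (Vn n)) ≠ ⊥ := by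
  have := nontrivial_Vn hn
  intro h
  obtain ⟨x, hx⟩ := exists_ne (0 : Vn n)
  have hmem : x ∈ (⊤ : Submodule ℂ (Vn n)) := trivial
  rw [h] at hmem
  exact hx (by simpa using hmem)

end Bridge

theorem local_subfactor_lattice_complete_complemented_finiteLength {n : ℕ} (hn : 0 < n)
    (𝒮 : Set (StarSubalgebra ℂ (Mat n)))
    (hfac : ∀ A ∈ 𝒮, IsFactor A) (htop : ⊤ ∈ 𝒮)
    (hmeet : ∀ T ⊆ 𝒮, sInf T ∈ 𝒮)
    (hcomm : ∀ A ∈ 𝒮, StarSubalgebra.centralizer ℂ (A : Set (Mat n)) ∈ 𝒮) :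
    -- completeness of 𝒮 with the induced order
    (∀ T : Set ↥𝒮, (∃ g : ↥𝒮, IsGLB T g) ∧ (∃ l : ↥𝒮, IsLUB T l)) ∧
    -- complementation
    (∀ A ∈ 𝒮, ∃ A' ∈ 𝒮, A ⊓ A' = sInf 𝒮 ∧
      ∀ B ∈ 𝒮, A ≤ B → A' ≤ B → B = ⊤) ∧
    -- finite length
    (∀ (k : ℕ) (c : Fin (k + 1) → ↥𝒮), StrictMono c →
      k ≤ ArithmeticFunction.cardFactors n) := by
  refine ⟨?_, ?_, ?_⟩
  · -- completeness
    intro T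
    constructor
    · refine ⟨⟨sInf (Subtype.val '' T), hmeet _ ?_⟩, ?_, ?_⟩
      · rintro B ⟨x, _, rfl⟩
        exact x.2
      · intro t ht
        show sInf (Subtype.val '' T) ≤ (t : StarSubalgebra ℂ (Mat n))
        exact sInf_le ⟨t, ht, rfl⟩
      · intro l hl
        show (l : StarSubalgebra ℂ (Mat n)) ≤ sInf (Subtype.val '' T)
        apply le_sInf
        rintro B ⟨x, hx, rfl⟩
        exact hl hx
    · refine ⟨⟨sInf {B | B ∈ 𝒮 ∧ ∀ t ∈ T, (t : StarSubalgebra ℂ (Mat n)) ≤ B},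
        hmeet _ (fun B hB => hB.1)⟩, ?_, ?_⟩
      · intro t ht
        show (t : StarSubalgebra ℂ (Mat n)) ≤ sInf _
        apply le_sInf
        rintro B ⟨_, hB⟩
        exact hB t ht
      · intro u hu
        show sInf _ ≤ (u : StarSubalgebra ℂ (Mat n))
        exact sInf_le ⟨u.2, fun t ht => hu ht⟩
  · -- complementation
    intro A hA
    refine ⟨StarSubalgebra.centralizer ℂ (A : Set (Mat n)), hcomm A hA, ?_, ?_⟩
    · apply le_antisymm
      · intro x hx
        have hxA : x ∈ A := (inf_le_left :
          A ⊓ StarSubalgebra.centralizer ℂ (A : Set (Mat n)) ≤ A) hx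
        have hxc : x ∈ StarSubalgebra.centralizer ℂ (A : Set (Mat n)) := (inf_le_right :
          A ⊓ StarSubalgebra.centralizer ℂ (A : Set (Mat n)) ≤ _) hx
        obtain ⟨c, rfl⟩ := hfac A hA x hxA (fun y hy => (mem_centA.1 hxc y hy).symm)
        apply StarSubalgebra.mem_sInf.2
        intro P hP
        have := P.algebraMap_mem c
        rwa [Algebra.algebraMap_eq_smul_one] at this
      · exact le_inf (sInf_le hA) (sInf_le (hcomm A hA))
    · intro B hB hAB hA'B
      have hBscal : ∀ m : Mat n, (∀ b ∈ B, b * m = m * b) → ∃ c : ℂ, m = c • (1 : Mat n) := by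
        intro m hm
        have hmA : m ∈ StarSubalgebra.centralizer ℂ (A : Set (Mat n)) :=
          mem_centA.2 (fun g hg => hm g (hAB hg))
        exact hfac _ (hcomm A hA) m hmA (fun y hy => (hm y (hA'B hy)).symm)
      have hFacCB : FacC B := by
        intro z hz _
        exact hBscal z (fun b hb => mem_centA.1 hz b hb)
      have htopS : SimpleA B ⊤ := by
        refine ⟨fun _ _ _ _ => trivial, top_ne_bot_Vn hn, ?_⟩
        intro U hU hUinv
        apply invariant_eq_bot_or_top hn hFacCB hUinv
        intro m hm v hv
        obtain ⟨c, rfl⟩ := hBscal m (fun b hb => mem_centA.1 hm b hb)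
        have hcv : mvl (c • (1 : Mat n)) v = c • v := by
          rw [mvl_smul, mvl_one]
          rfl
        rw [hcv]
        exact U.smul_mem c hv
      apply eq_top_iff.2
      intro x _
      obtain ⟨b, hb, hbeq⟩ := burn htopS x (fun v _ => trivial)
      have hbx : b = x := by
        apply mvl_inj
        apply LinearMap.ext
        intro v
        apply WithLp.ofLp_injective 2
        rw [mvl_apply, mvl_apply, hbeq v trivial]
      exact hbx ▸ hb
  · -- finite length
    intro k c hc
    have hFac : ∀ A : ↥𝒮, FacC (A : StarSubalgebra ℂ (Mat n)) :=
      fun A => hfac _ (hcomm _ A.2)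
    have hsim : ∀ A : ↥𝒮, ∃ S, SimpleA (A : StarSubalgebra ℂ (Mat n)) S := by
      intro A
      obtain ⟨S, _, hS⟩ := exists_simple_le (A := (A : StarSubalgebra ℂ (Mat n)))
        (Module.finrank ℂ (⊤ : Submodule ℂ (Vn n))) ⊤ rfl
        (fun _ _ _ _ => trivial) (top_ne_bot_Vn hn)
      exact ⟨S, hS⟩
    choose Sc hSc using hsim
    set D : Fin (k + 1) → ℕ := fun i => Module.finrank ℂ (Sc (c i)) with hD
    have hDpos : ∀ i, D i ≠ 0 := by
      intro i h
      exact (hSc (c i)).2.1 (Submodule.finrank_eq_zero.1 h)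
    have hDn : ∀ i, D i ∣ n := by
      intro i
      have := simple_dvd_finrank hn (hFac (c i)) (hSc (c i))
        (Module.finrank ℂ (⊤ : Submodule ℂ (Vn n))) ⊤ rfl (fun _ _ _ _ => trivial)
      rwa [finrank_top, finrank_euclideanSpace_fin] at this
    have hstep : ∀ i j : Fin (k + 1), i < j → D i ∣ D j ∧ D i ≠ D j := by
      intro i j hij
      have hlt : c i < c j := hc hij
      have hle : (c i : StarSubalgebra ℂ (Mat n)) ≤ (c j : StarSubalgebra ℂ (Mat n)) :=
        le_of_lt (Subtype.coe_lt_coe.2 hlt)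
      have hinv : InvA (c i : StarSubalgebra ℂ (Mat n)) (Sc (c j)) :=
        fun a ha => (hSc (c j)).1 a (hle ha)
      refine ⟨simple_dvd_finrank hn (hFac (c i)) (hSc (c i)) _ _ rfl hinv, ?_⟩
      intro heq
      have h1 := finrank_algebra_eq_sq hn (hFac (c i)) (hSc (c i))
      have h2 := finrank_algebra_eq_sq hn (hFac (c j)) (hSc (c j))
      have hsublt : Subalgebra.toSubmodule ((c i : StarSubalgebra ℂ (Mat n)).toSubalgebra) <
          Subalgebra.toSubmodule ((c j : StarSubalgebra ℂ (Mat n)).toSubalgebra) := by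
        refine lt_of_le_of_ne ?_ ?_
        · intro x hx
          exact (Subalgebra.mem_toSubmodule _).2 (hle ((Subalgebra.mem_toSubmodule _).1 hx))
        · intro hEq
          apply ne_of_lt hlt
          apply Subtype.ext
          apply SetLike.ext
          intro x
          constructor
          · intro hx
            exact (Subalgebra.mem_toSubmodule _).1
              (hEq ▸ (Subalgebra.mem_toSubmodule _).2 hx)
          · intro hx
            exact (Subalgebra.mem_toSubmodule _).1
              (hEq.symm ▸ (Subalgebra.mem_toSubmodule _).2 hx)
      have hfrlt := Submodule.finrank_lt_finrank_of_lt hsublt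
      rw [finrank_toSubmodule, finrank_toSubmodule] at hfrlt
      have heq' : Module.finrank ℂ (Sc (c i)) = Module.finrank ℂ (Sc (c j)) := heq
      rw [h1, h2, heq'] at hfrlt
      exact lt_irrefl _ hfrlt
    have hind : ∀ m : ℕ, ∀ hm : m < k + 1, m ≤ ArithmeticFunction.cardFactors (D ⟨m, hm⟩) := by
      intro m
      induction m with
      | zero => intro hm; exact Nat.zero_le _
      | succ p ih =>
        intro hm
        have hp : p < k + 1 := Nat.lt_of_succ_lt hm
        have h1 := ih hp
        have hij : (⟨p, hp⟩ : Fin (k + 1)) < ⟨p + 1, hm⟩ := by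
          rw [Fin.mk_lt_mk]
          exact Nat.lt_succ_self p
        obtain ⟨hdvd, hne⟩ := hstep _ _ hij
        have := omega_lt_of_dvd hdvd hne (hDpos ⟨p + 1, hm⟩)
        omega
    have hk := hind k (Nat.lt_succ_self k)
    have hfin := omega_le_of_dvd (hDn ⟨k, Nat.lt_succ_self k⟩) hn.ne'
    exact le_trans hk hfin
end

section
/- Let L be a complete atomistic lattice. Then the lattice of **-closed down-sets of L is isomorphic to the power set lattice of the set of atoms of L, via the map sending a set α of atoms to the **-closure of α ∪ {0}, with inverse sending a **-closed down-set to the set of atoms it contains. -/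
/-!
Call `S` atom-generated if every nonzero element of `S` lies above an atom of `S`. For such `S`
(containing `0`), `S*` consists of the `x` having no atom of `S` below them. In an atomic lattice every
down-set is atom-generated, so applying this twice shows that `S**` is the set of `x` all of whose
atoms lie in `S`. Hence a `**`-closed down-set is determined by its atoms, and every set of atoms
arises this way.
-/

variable {L : Type*} [CompleteLattice L]

/-- L is atomistic: every element is the join of the atoms below it. -/
def Atomistic (L : Type*) [CompleteLattice L] : Prop :=
  ∀ b : L, b = sSup {a : L | IsAtom a ∧ a ≤ b}

theorem Atomistic.isAtomic (hL : Atomistic L) : IsAtomic L := by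
  refine ⟨fun b => or_iff_not_imp_left.2 fun hb => ?_⟩
  by_contra! h
  have hempty : {a : L | IsAtom a ∧ a ≤ b} = ∅ :=
    Set.eq_empty_of_forall_notMem fun a ha => h a ha.1 ha.2
  exact hb (by rw [hL b, hempty, sSup_empty])

theorem IsDownSet.exists_atom_mem [IsAtomic L] {ω : Set L} (hω : IsDownSet ω) {y : L}
    (hy : y ∈ ω) (hy0 : y ≠ ⊥) : ∃ a ∈ ω, IsAtom a ∧ a ≤ y := by
  obtain ⟨a, ha, hay⟩ := (eq_bot_or_exists_atom_le y).resolve_left hy0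
  exact ⟨a, hω.2 hy hay, ha, hay⟩

theorem pcomp_eq_setOf {S : Set L} (h0 : ⊥ ∈ S) :
    pcomp S = {x | ∀ y ≤ x, y ∈ S → y = ⊥} := by
  set Ω := {x | ∀ y ≤ x, y ∈ S → y = ⊥}
  have hΩ : IsDownSet Ω :=
    ⟨fun y hy _ => le_bot_iff.1 hy, fun x z hx hzx y hyz hy => hx y (hyz.trans hzx) hy⟩
  have hSΩ : S ∩ Ω = {⊥} :=
    Set.eq_singleton_iff_unique_mem.2 ⟨⟨h0, hΩ.1⟩, fun y hy => hy.2 y le_rfl hy.1⟩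
  refine Set.Subset.antisymm ?_ fun x hx => ⟨Ω, ⟨hΩ, hSΩ⟩, hx⟩
  rintro x ⟨ω, ⟨hω, hSω⟩, hx⟩ y hyx hy
  have hySω : y ∈ S ∩ ω := ⟨hy, hω.2 hx hyx⟩
  rwa [hSω] at hySω

def atomClosure (S : Set L) : Set L :=
  {x | ∀ a, IsAtom a → a ≤ x → a ∈ S}

theorem isDownSet_atomClosure (S : Set L) : IsDownSet (atomClosure S) :=
  ⟨fun _ ha ha0 => absurd (le_bot_iff.1 ha0) ha.1,
    fun _ _ hx hyx a ha hay => hx a ha (hay.trans hyx)⟩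

theorem IsAtom.mem_atomClosure_iff {S : Set L} {a : L} (ha : IsAtom a) :
    a ∈ atomClosure S ↔ a ∈ S :=
  ⟨fun h => h a ha le_rfl, fun h b hb hba => by rwa [(ha.le_iff_eq hb.1).1 hba]⟩

theorem atomClosure_subset_atomClosure_iff {S T : Set L} :
    atomClosure S ⊆ atomClosure T ↔ ∀ a, IsAtom a → a ∈ S → a ∈ T :=
  ⟨fun h _ ha haS => ha.mem_atomClosure_iff.1 (h (ha.mem_atomClosure_iff.2 haS)),
    fun h _ hx _ ha hax => h _ ha (hx _ ha hax)⟩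

theorem atomClosure_congr {S T : Set L} (h : ∀ a, IsAtom a → (a ∈ S ↔ a ∈ T)) :
    atomClosure S = atomClosure T :=
  Set.Subset.antisymm (atomClosure_subset_atomClosure_iff.2 fun a ha => (h a ha).1)
    (atomClosure_subset_atomClosure_iff.2 fun a ha => (h a ha).2)

theorem pcomp_eq_atomClosure_compl {S : Set L} (h0 : ⊥ ∈ S)
    (hS : ∀ y ∈ S, y ≠ ⊥ → ∃ a ∈ S, IsAtom a ∧ a ≤ y) :
    pcomp S = atomClosure Sᶜ := by
  rw [pcomp_eq_setOf h0]
  ext x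
  refine ⟨fun hx a ha hax haS => ha.1 (hx a hax haS), fun hx y hyx hy => ?_⟩
  by_contra hy0
  obtain ⟨a, haS, ha, hay⟩ := hS y hy hy0
  exact hx a ha (hay.trans hyx) haS

theorem pcomp_atomClosure [IsAtomic L] (S : Set L) : pcomp (atomClosure S) = atomClosure Sᶜ := by
  have hdown := isDownSet_atomClosure S
  rw [pcomp_eq_atomClosure_compl hdown.1 fun y => hdown.exists_atom_mem]
  exact atomClosure_congr fun a ha => not_congr ha.mem_atomClosure_iff

theorem pcomp_pcomp_eq_atomClosure [IsAtomic L] {S : Set L} (h0 : ⊥ ∈ S)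
    (hS : ∀ y ∈ S, y ≠ ⊥ → ∃ a ∈ S, IsAtom a ∧ a ≤ y) :
    pcomp (pcomp S) = atomClosure S := by
  rw [pcomp_eq_atomClosure_compl h0 hS, pcomp_atomClosure, compl_compl]

theorem IsDownSet.pcomp_pcomp_eq_atomClosure [IsAtomic L] {ω : Set L} (hω : IsDownSet ω) :
    pcomp (pcomp ω) = atomClosure ω :=
  _root_.pcomp_pcomp_eq_atomClosure hω.1 fun _ => hω.exists_atom_mem

theorem pcomp_pcomp_insert_bot_image_val [IsAtomic L] (α : Set {a : L // IsAtom a}) :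
    pcomp (pcomp (insert ⊥ (Subtype.val '' α))) = atomClosure (Subtype.val '' α) := by
  rw [pcomp_pcomp_eq_atomClosure (Set.mem_insert _ _)]
  · exact atomClosure_congr fun a ha => by simp [ha.1]
  · rintro y (rfl | ⟨a, haα, rfl⟩) hy0
    · exact absurd rfl hy0
    · exact ⟨a, Set.mem_insert_of_mem _ ⟨a, haα, rfl⟩, a.2, le_rfl⟩

theorem val_mem_atomClosure_image_val {α : Set {a : L // IsAtom a}} {a : {a : L // IsAtom a}} :
    (a : L) ∈ atomClosure (Subtype.val '' α) ↔ a ∈ α := by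
  rw [a.2.mem_atomClosure_iff, Subtype.val_injective.mem_set_image]

theorem closedDownsets_iso_powerset_of_atoms (hL : Atomistic L) :
    letI φ : Set {a : L // IsAtom a} → Set L :=
      fun α => pcomp (pcomp (insert (⊥ : L) ((fun a : {a : L // IsAtom a} => (a : L)) '' α)))
    (∀ α, IsDownSet (φ α) ∧ pcomp (pcomp (φ α)) = φ α) ∧
    (∀ α, {a : {a : L // IsAtom a} | (a : L) ∈ φ α} = α) ∧
    (∀ ω : Set L, IsDownSet ω → pcomp (pcomp ω) = ω →
      φ {a : {a : L // IsAtom a} | (a : L) ∈ ω} = ω) ∧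
    (∀ α β, α ⊆ β ↔ φ α ⊆ φ β) := by
  have := hL.isAtomic
  simp only [pcomp_pcomp_insert_bot_image_val]
  refine ⟨fun α => ⟨isDownSet_atomClosure _, ?_⟩, fun α => ?_, fun ω hω hωω => ?_, fun α β => ?_⟩
  · rw [(isDownSet_atomClosure _).pcomp_pcomp_eq_atomClosure]
    exact atomClosure_congr fun a ha => ha.mem_atomClosure_iff
  · ext a
    exact val_mem_atomClosure_image_val
  · conv_rhs => rw [← hωω, hω.pcomp_pcomp_eq_atomClosure]
    exact atomClosure_congr fun a ha => by simp [ha]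
  · rw [atomClosure_subset_atomClosure_iff]
    refine ⟨fun h a ha haα => ?_, fun h a haα => ?_⟩
    · obtain ⟨b, hbα, rfl⟩ := haα
      exact ⟨b, h hbα, rfl⟩
    · exact Subtype.val_injective.mem_set_image.1 (h a a.2 ⟨a, haα, rfl⟩)
end
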